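/- arXiv:0911.2384 — 7 statements merged into one kernel-verified Lean document; each statement's English description precedes it below -/
import Mathlib

section
/- The maximum number of non-attacking brooks that can be placed on a triangular board of width w is ⌊(2w+1)/3⌋. Here a triangular board of width w is the set of cells (x,y) in ℤ² with 1 ≤ x, 1 ≤ y, and x + y ≤ w + 1, and a set of brooks is non-attacking if no two of its cells share an x-coordinate, share a y-coordinate, or share the value x + y (i.e., lie on the same North-East to South-West diagonal). -/
/-!
Summing coordinates bounds the number `n` of brooks: their `n` distinct columns `x ≥ 1` have
sum at least `n (n + 1) / 2`, and so do their rows, while their `n` distinct anti-diagonals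
`x + y ≤ w + 1` have sum at most `n (w + 1) - n (n - 1) / 2`. Comparing gives `3 n ≤ 2 w + 1`.
Conversely, with `k = ⌊n / 2⌋`, put `n - k` brooks on the diagonal `y = x + k` and `k` on the
diagonal `y = x - k - 1`; the anti-diagonals of the two groups have opposite parities.
-/

open Finset

def IsBrookPlacement (w : ℕ) (S : Finset (ℤ × ℤ)) : Prop :=
  (∀ p ∈ S, 1 ≤ p.1 ∧ 1 ≤ p.2 ∧ p.1 + p.2 ≤ (w : ℤ) + 1) ∧
    Set.InjOn (fun p : ℤ × ℤ => p.1) ↑S ∧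
    Set.InjOn (fun p : ℤ × ℤ => p.2) ↑S ∧
    Set.InjOn (fun p : ℤ × ℤ => p.1 + p.2) ↑S

lemma Finset.two_mul_sum_range_natCast (N : ℕ) : 2 * ∑ n ∈ range N, (n : ℤ) = N * (N - 1) := by
  induction N with
  | zero => simp
  | succ N ih => rw [sum_range_succ, mul_add, ih]; push_cast; ring

section DistinctValues

variable {ι : Type*} {S : Finset ι} {f : ι → ℤ} {c : ℤ}

lemma Finset.card_mul_le_two_mul_sum_of_injOn (hf : Set.InjOn f S) (hc : ∀ i ∈ S, c ≤ f i) :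
    #S * (2 * c + #S - 1) ≤ 2 * ∑ i ∈ S, f i := by
  have hcard : #(S.image f) = #S := card_image_of_injOn hf
  have hbound := sum_range_le_sum (s := S.image f) (c := c) (by simpa using hc)
  rw [sum_image hf, hcard, sum_add_distrib, sum_const, card_range, nsmul_eq_mul] at hbound
  linarith [two_mul_sum_range_natCast #S]

lemma Finset.two_mul_sum_le_card_mul_of_injOn (hf : Set.InjOn f S) (hc : ∀ i ∈ S, f i ≤ c) :
    2 * ∑ i ∈ S, f i ≤ #S * (2 * c - #S + 1) := by
  have hcard : #(S.image f) = #S := card_image_of_injOn hf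
  have hbound := sum_le_sum_range (s := S.image f) (c := c) (by simpa using hc)
  rw [sum_image hf, hcard, sum_sub_distrib, sum_const, card_range, nsmul_eq_mul] at hbound
  linarith [two_mul_sum_range_natCast #S]

end DistinctValues

lemma IsBrookPlacement.three_mul_card_le {w : ℕ} {S : Finset (ℤ × ℤ)}
    (hS : IsBrookPlacement w S) : 3 * #S ≤ 2 * w + 1 := by
  obtain ⟨hmem, hx, hy, hd⟩ := hS
  have hxsum := card_mul_le_two_mul_sum_of_injOn hx (c := 1) fun p hp => (hmem p hp).1
  have hysum := card_mul_le_two_mul_sum_of_injOn hy (c := 1) fun p hp => (hmem p hp).2.1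
  have hdsum := two_mul_sum_le_card_mul_of_injOn hd fun p hp => (hmem p hp).2.2
  rw [sum_add_distrib] at hdsum
  have : (#S : ℤ) * (3 * #S) ≤ #S * (2 * w + 1) := by linarith
  rcases (#S).eq_zero_or_pos with h | h
  · omega
  · exact Nat.le_of_mul_le_mul_left (by exact_mod_cast this) h

def twoDiagonals (a k i : ℕ) : ℤ × ℤ :=
  if i < a then ((i : ℤ) + 1, (k : ℤ) + i + 1) else ((k : ℤ) + i - a + 2, (i : ℤ) - a + 1)

section TwoDiagonals

variable {a k : ℕ}

lemma twoDiagonals_mem_triangle {w i : ℕ} (hi : i < a + k) (hka : k + 2 * a ≤ w + 1)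
    (hkw : 3 * k ≤ w) :
    1 ≤ (twoDiagonals a k i).1 ∧ 1 ≤ (twoDiagonals a k i).2 ∧
      (twoDiagonals a k i).1 + (twoDiagonals a k i).2 ≤ (w : ℤ) + 1 := by
  unfold twoDiagonals
  split_ifs <;> omega

lemma twoDiagonals_injOn_comp {g : ℤ × ℤ → ℤ} (ha : a ≤ k + 1)
    (hg : g = Prod.fst ∨ g = Prod.snd ∨ g = fun p => p.1 + p.2) :
    Set.InjOn (g ∘ twoDiagonals a k) ↑(range (a + k)) := by
  intro i hi j hj hij
  simp only [coe_range, Set.mem_Iio, Function.comp_apply, twoDiagonals] at hi hj hij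
  rcases hg with rfl | rfl | rfl <;> split_ifs at hij <;> simp only at hij <;> omega

lemma card_image_twoDiagonals (ha : a ≤ k + 1) :
    #((range (a + k)).image (twoDiagonals a k)) = a + k := by
  rw [card_image_of_injOn (twoDiagonals_injOn_comp ha (Or.inl rfl)).of_comp, card_range]

lemma isBrookPlacement_twoDiagonals {w : ℕ} (ha : a ≤ k + 1) (hka : k + 2 * a ≤ w + 1)
    (hkw : 3 * k ≤ w) : IsBrookPlacement w ((range (a + k)).image (twoDiagonals a k)) := by
  refine ⟨?_, ?_, ?_, ?_⟩
  · simp only [mem_image, mem_range, forall_exists_index, and_imp]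
    rintro _ i hi rfl
    exact twoDiagonals_mem_triangle hi hka hkw
  all_goals
    rw [coe_image]
    exact Set.InjOn.image_of_comp (twoDiagonals_injOn_comp ha (by simp))

end TwoDiagonals

theorem brooks_max_general (w : ℕ) :
    IsGreatest {n : ℕ | ∃ S : Finset (ℤ × ℤ),
      S.card = n ∧
      (∀ p ∈ S, 1 ≤ p.1 ∧ 1 ≤ p.2 ∧ p.1 + p.2 ≤ (w : ℤ) + 1) ∧
      Set.InjOn (fun p : ℤ × ℤ => p.1) ↑S ∧
      Set.InjOn (fun p : ℤ × ℤ => p.2) ↑S ∧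
      Set.InjOn (fun p : ℤ × ℤ => p.1 + p.2) ↑S}
    ((2 * w + 1) / 3) := by
  constructor
  · set n := (2 * w + 1) / 3
    refine ⟨_, ?_, isBrookPlacement_twoDiagonals (a := n - n / 2) (k := n / 2)
      (by omega) (by omega) (by omega)⟩
    rw [card_image_twoDiagonals (by omega)]
    omega
  · rintro n ⟨S, rfl, hS⟩
    have := IsBrookPlacement.three_mul_card_le (w := w) hS
    omega

/-- The maximum number of non-attacking brooks on a triangular board of width `w`
is `⌊(2w+1)/3⌋`. -/
theorem brooks_max (w : ℕ) (hw : 0 < w) :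
    IsGreatest {n : ℕ | ∃ S : Finset (ℤ × ℤ),
      S.card = n ∧
      (∀ p ∈ S, 1 ≤ p.1 ∧ 1 ≤ p.2 ∧ p.1 + p.2 ≤ (w : ℤ) + 1) ∧
      Set.InjOn (fun p : ℤ × ℤ => p.1) ↑S ∧
      Set.InjOn (fun p : ℤ × ℤ => p.2) ↑S ∧
      Set.InjOn (fun p : ℤ × ℤ => p.1 + p.2) ↑S}
    ((2 * w + 1) / 3) :=
  brooks_max_general w
end

section
/- At most ⌊(2w+1)/3⌋ non-attacking brooks can be placed on a triangular board of width w: if S ⊆ {(x,y) ∈ ℤ² : 1 ≤ x, 1 ≤ y, x + y ≤ w+1} is such that the coordinate maps x, y, and x+y are each injective on S, then |S| ≤ ⌊(2w+1)/3⌋. -/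
/-!
For `n` non-attacking brooks, the first coordinates, the second coordinates and the reflected
diagonal indices `w + 2 - (x + y)` are three families of `n` distinct positive integers, so each
sums to at least `n (n + 1) / 2`. The three values of one brook add up to `w + 2`, so the three
sums together equal `n (w + 2)`, whence `3 (n + 1) ≤ 2 (w + 2)`.
-/

open Finset

theorem Finset.card_mul_card_add_one_le_two_mul_sum {T : Finset ℤ} (hT : ∀ a ∈ T, 1 ≤ a) :
    (#T : ℤ) * (#T + 1) ≤ 2 * ∑ a ∈ T, a := by
  induction T using induction_on_max with
  | empty => simp
  | insert a s hlt ih =>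
    have ha : a ∉ s := fun h => (hlt a h).false
    have hs : (#s : ℤ) ≤ a - 1 := by
      have h1 : 1 ≤ a := hT a (mem_insert_self a s)
      calc (#s : ℤ) ≤ #(Ico 1 a) := by
            exact_mod_cast card_le_card fun x hx =>
              mem_Ico.2 ⟨hT x (mem_insert_of_mem hx), hlt x hx⟩
        _ = a - 1 := Int.card_Ico_of_le _ _ h1
    have ih := ih fun x hx => hT x (mem_insert_of_mem hx)
    rw [card_insert_of_notMem ha, sum_insert ha]
    push_cast
    nlinarith

theorem Finset.card_mul_card_add_one_le_two_mul_sum_of_injOn {α : Type*} {S : Finset α}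
    {f : α → ℤ} (hf : Set.InjOn f S) (hpos : ∀ p ∈ S, 1 ≤ f p) :
    (#S : ℤ) * (#S + 1) ≤ 2 * ∑ p ∈ S, f p := by
  have := card_mul_card_add_one_le_two_mul_sum (T := S.image f) (by simpa using hpos)
  rwa [card_image_of_injOn hf, sum_image hf] at this

theorem Finset.three_mul_card_add_one_le_of_injOn_of_add_eq {α : Type*} {S : Finset α}
    {f g h : α → ℤ} {c : ℤ}
    (hf : Set.InjOn f S) (hg : Set.InjOn g S) (hh : Set.InjOn h S)
    (hfpos : ∀ p ∈ S, 1 ≤ f p) (hgpos : ∀ p ∈ S, 1 ≤ g p) (hhpos : ∀ p ∈ S, 1 ≤ h p)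
    (hsum : ∀ p ∈ S, f p + g p + h p = c) (hne : S.Nonempty) :
    3 * ((#S : ℤ) + 1) ≤ 2 * c := by
  have htotal : ∑ p ∈ S, f p + ∑ p ∈ S, g p + ∑ p ∈ S, h p = #S * c := by
    rw [← sum_add_distrib, ← sum_add_distrib, sum_congr rfl hsum, sum_const, nsmul_eq_mul]
  have hcard : (0 : ℤ) < #S := by exact_mod_cast hne.card_pos
  nlinarith [card_mul_card_add_one_le_two_mul_sum_of_injOn hf hfpos,
    card_mul_card_add_one_le_two_mul_sum_of_injOn hg hgpos,
    card_mul_card_add_one_le_two_mul_sum_of_injOn hh hhpos]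

/-- At most `⌊(2w+1)/3⌋` non-attacking brooks fit on a triangular board of width `w`. -/
theorem brooks_upper_bound (w : ℕ) (S : Finset (ℤ × ℤ))
    (hboard : ∀ p ∈ S, 1 ≤ p.1 ∧ 1 ≤ p.2 ∧ p.1 + p.2 ≤ (w : ℤ) + 1)
    (hx : Set.InjOn (fun p : ℤ × ℤ => p.1) ↑S)
    (hy : Set.InjOn (fun p : ℤ × ℤ => p.2) ↑S)
    (hd : Set.InjOn (fun p : ℤ × ℤ => p.1 + p.2) ↑S) :
    S.card ≤ (2 * w + 1) / 3 := by
  rcases S.eq_empty_or_nonempty with rfl | hne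
  · simp
  have hd' : Set.InjOn (fun p : ℤ × ℤ => (w : ℤ) + 2 - (p.1 + p.2)) S :=
    fun p hp q hq hpq => hd hp hq (by simpa using hpq)
  have hbound := three_mul_card_add_one_le_of_injOn_of_add_eq (c := (w : ℤ) + 2) hx hy hd'
    (fun p hp => (hboard p hp).1) (fun p hp => (hboard p hp).2.1)
    (fun p hp => by linarith [(hboard p hp).2.2]) (fun p _ => by ring) hne
  omega
end

section
/- For every positive integer w, there exists a set of ⌊(2w+1)/3⌋ non-attacking brooks on the triangular board of width w, i.e., a set S of that cardinality inside {(x,y) ∈ ℤ² : 1 ≤ x, 1 ≤ y, x+y ≤ w+1} on which the maps x, y, and x+y are all injective. -/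
/-!
Place brooks on two diagonal segments of slope one: cells `(x, x + a)` for `1 ≤ x ≤ m` and
`(x, x - m)` for `m < x ≤ m + r`. The two segments use disjoint columns, and disjoint rows as
long as `r ≤ a`; their anti-diagonal sums `2x + a` and `2x - m` have different parities once
`a + m` is odd. Both fit in the triangle when `a + 2m ≤ w + 1` and `m + 2r ≤ w + 1`, and
`m = ⌈w/3⌉`, `r = ⌊w/3⌋`, `a = 2⌊w/3⌋ + 1 - m` meet all constraints with `m + r = ⌊(2w+1)/3⌋`.
-/

open Finset

def triangularBoard (w : ℕ) : Set (ℤ × ℤ) :=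
  {p | 1 ≤ p.1 ∧ 1 ≤ p.2 ∧ p.1 + p.2 ≤ (w : ℤ) + 1}

def IsNonAttacking (S : Set (ℤ × ℤ)) : Prop :=
  S.InjOn Prod.fst ∧ S.InjOn Prod.snd ∧ S.InjOn fun p => p.1 + p.2

theorem Set.InjOn.union_of_forall_ne {α β : Type*} {f : α → β} {s t : Set α}
    (hs : s.InjOn f) (ht : t.InjOn f) (hst : ∀ x ∈ s, ∀ y ∈ t, f x ≠ f y) :
    (s ∪ t).InjOn f :=
  (Set.injOn_union (Set.disjoint_left.2 fun x hxs hxt => hst x hxs x hxt rfl)).2 ⟨hs, ht, hst⟩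

theorem IsNonAttacking.union {S T : Set (ℤ × ℤ)} (hS : IsNonAttacking S) (hT : IsNonAttacking T)
    (hcol : ∀ p ∈ S, ∀ q ∈ T, p.1 ≠ q.1) (hrow : ∀ p ∈ S, ∀ q ∈ T, p.2 ≠ q.2)
    (hdiag : ∀ p ∈ S, ∀ q ∈ T, p.1 + p.2 ≠ q.1 + q.2) : IsNonAttacking (S ∪ T) :=
  ⟨hS.1.union_of_forall_ne hT.1 hcol, hS.2.1.union_of_forall_ne hT.2.1 hrow,
    hS.2.2.union_of_forall_ne hT.2.2 hdiag⟩

noncomputable def diagonalSegment (d lo hi : ℤ) : Finset (ℤ × ℤ) :=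
  (Icc lo hi).map ⟨fun x => (x, x + d), fun _ _ h => (Prod.mk.inj h).1⟩

section diagonalSegment

variable {d lo hi : ℤ}

theorem mem_diagonalSegment {p : ℤ × ℤ} :
    p ∈ diagonalSegment d lo hi ↔ lo ≤ p.1 ∧ p.1 ≤ hi ∧ p.2 = p.1 + d := by
  simp only [diagonalSegment, mem_map, mem_Icc]
  constructor
  · rintro ⟨x, ⟨hlo, hhi⟩, rfl⟩
    exact ⟨hlo, hhi, rfl⟩
  · rintro ⟨hlo, hhi, h⟩
    exact ⟨p.1, ⟨hlo, hhi⟩, Prod.ext rfl h.symm⟩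

theorem card_diagonalSegment : #(diagonalSegment d lo hi) = (hi + 1 - lo).toNat := by
  rw [diagonalSegment, card_map, Int.card_Icc]

theorem isNonAttacking_diagonalSegment :
    IsNonAttacking (diagonalSegment d lo hi : Set (ℤ × ℤ)) := by
  refine ⟨fun p hp q hq (hpq : p.1 = q.1) => ?_, fun p hp q hq (hpq : p.2 = q.2) => ?_,
    fun p hp q hq (hpq : p.1 + p.2 = q.1 + q.2) => ?_⟩ <;>
  · rw [mem_coe, mem_diagonalSegment] at hp hq
    exact Prod.ext (by omega) (by omega)

end diagonalSegment

theorem exists_nonAttacking_two_diagonals (w m r a : ℕ) (hra : r ≤ a) (hodd : Odd (a + m))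
    (hfirst : a + 2 * m ≤ w + 1) (hsecond : m + 2 * r ≤ w + 1) :
    ∃ S : Finset (ℤ × ℤ), #S = m + r ∧ ↑S ⊆ triangularBoard w ∧ IsNonAttacking S := by
  obtain ⟨k, hk⟩ := hodd
  set A := diagonalSegment a 1 m
  set B := diagonalSegment (-m) (m + 1) (m + r)
  have hA : ∀ p ∈ A, 1 ≤ p.1 ∧ p.1 ≤ m ∧ p.2 = p.1 + a := fun p => mem_diagonalSegment.1
  have hB : ∀ q ∈ B, m + 1 ≤ q.1 ∧ q.1 ≤ m + r ∧ q.2 = q.1 - m := fun q hq => by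
    obtain ⟨hlo, hhi, hq2⟩ := mem_diagonalSegment.1 hq
    exact ⟨hlo, hhi, by omega⟩
  have hcol : ∀ p ∈ A, ∀ q ∈ B, p.1 ≠ q.1 := fun p hp q hq => by
    have := hA p hp; have := hB q hq; omega
  refine ⟨A ∪ B, ?_, ?_, ?_⟩
  · rw [card_union_of_disjoint (disjoint_left.2 fun p hpA hpB => hcol p hpA p hpB rfl),
      card_diagonalSegment, card_diagonalSegment]
    omega
  · intro p hp
    rcases mem_union.1 hp with hp | hp
    · have := hA p hp; exact ⟨by omega, by omega, by omega⟩
    · have := hB p hp; exact ⟨by omega, by omega, by omega⟩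
  · rw [coe_union]
    refine isNonAttacking_diagonalSegment.union isNonAttacking_diagonalSegment hcol ?_ ?_ <;>
    · intro p hp q hq
      have := hA p hp; have := hB q hq; omega

theorem brooks_lower_bound_general (w : ℕ) :
    ∃ S : Finset (ℤ × ℤ),
      S.card = (2 * w + 1) / 3 ∧
      (∀ p ∈ S, 1 ≤ p.1 ∧ 1 ≤ p.2 ∧ p.1 + p.2 ≤ (w : ℤ) + 1) ∧
      Set.InjOn (fun p : ℤ × ℤ => p.1) ↑S ∧
      Set.InjOn (fun p : ℤ × ℤ => p.2) ↑S ∧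
      Set.InjOn (fun p : ℤ × ℤ => p.1 + p.2) ↑S := by
  obtain ⟨S, hcard, hboard, hcol, hrow, hdiag⟩ :=
    exists_nonAttacking_two_diagonals w ((w + 2) / 3) (w / 3) (2 * (w / 3) + 1 - (w + 2) / 3)
      (by omega) ⟨w / 3, by omega⟩ (by omega) (by omega)
  exact ⟨S, by omega, fun p hp => hboard hp, hcol, hrow, hdiag⟩

/-- There exists a set of `⌊(2w+1)/3⌋` non-attacking brooks on the
triangular board of width `w`, for every positive integer `w`. -/
theorem brooks_lower_bound (w : ℕ) (hw : 0 < w) :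
    ∃ S : Finset (ℤ × ℤ),
      S.card = (2 * w + 1) / 3 ∧
      (∀ p ∈ S, 1 ≤ p.1 ∧ 1 ≤ p.2 ∧ p.1 + p.2 ≤ (w : ℤ) + 1) ∧
      Set.InjOn (fun p : ℤ × ℤ => p.1) ↑S ∧
      Set.InjOn (fun p : ℤ × ℤ => p.2) ↑S ∧
      Set.InjOn (fun p : ℤ × ℤ => p.1 + p.2) ↑S :=
  brooks_lower_bound_general w
end

section
/- If n is a positive integer and S ⊆ ℤ² is a set of n points such that the first coordinates of S are n consecutive integers with each value attained exactly once, the second coordinates of S are n consecutive integers with each value attained exactly once, and the coordinate-sums x+y of S are n consecutive integers with each value attained exactly once, then n is odd. -/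
/-!
Sum the three coordinates `x`, `y`, `x + y` over `S`. Each of these sums runs over `n`
consecutive integers `t, …, t + n - 1`, so twice it equals `n (2t + n - 1)`. Since
`Σ (x + y) = Σ x + Σ y`, the starting points `a, b, c` of the columns, rows and diagonals satisfy
`n (2a + n - 1) + n (2b + n - 1) = n (2c + n - 1)`; cancelling `n` gives `n = 2 (c - a - b) + 1`.
-/

open Finset

theorem Finset.sum_eq_sum_of_subset_image {α β : Type*} [DecidableEq β] [AddCommMonoid β]
    {S : Finset α} {I : Finset β} {f : α → β} (hI : I ⊆ S.image f) (hcard : #S ≤ #I) :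
    ∑ p ∈ S, f p = ∑ k ∈ I, k := by
  have hle : #I ≤ #(S.image f) := card_le_card hI
  have hge : #(S.image f) ≤ #S := card_image_le
  have hinj : Set.InjOn f S := card_image_iff.mp (by omega)
  rw [eq_of_subset_of_card_le hI (by omega), sum_image hinj]

theorem Int.two_mul_sum_Ico_add (t : ℤ) (n : ℕ) :
    2 * ∑ k ∈ Ico t (t + n), k = n * (2 * t + n - 1) := by
  induction n with
  | zero => simp
  | succ n ih =>
    rw [Nat.cast_succ, ← add_assoc, ← insert_Ico_right_eq_Ico_add_one (by omega),
      sum_insert right_notMem_Ico, mul_add, ih]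
    ring

theorem two_mul_sum_eq_of_Icc_subset_image {α : Type*} {S : Finset α} (f : α → ℤ) {n : ℕ}
    {t : ℤ} (hcard : #S = n) (h : ∀ k ∈ Icc t (t + n - 1), ∃ p ∈ S, f p = k) :
    2 * ∑ p ∈ S, f p = n * (2 * t + n - 1) := by
  classical
  have hIcc : Icc t (t + n - 1) = Ico t (t + n) := by
    rw [← Ico_add_one_right_eq_Icc, sub_add_cancel]
  rw [sum_eq_sum_of_subset_image (I := Icc t (t + n - 1)) (fun k hk => mem_image.mpr (h k hk))
    (by rw [Int.card_Icc, hcard]; omega), hIcc, Int.two_mul_sum_Ico_add]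

/-- If the `x`-coordinates, `y`-coordinates, and coordinate-sums of a set of `n`
points in `ℤ²` each form `n` consecutive integers, each attained exactly once,
then `n` is odd. -/
theorem hexagonal_permutation_odd (n : ℕ) (hn : 0 < n) (S : Finset (ℤ × ℤ))
    (hcard : S.card = n)
    (hx : ∃ a : ℤ, ∀ k ∈ Finset.Icc a (a + n - 1), ∃! p, p ∈ S ∧ p.1 = k)
    (hy : ∃ b : ℤ, ∀ k ∈ Finset.Icc b (b + n - 1), ∃! p, p ∈ S ∧ p.2 = k)
    (hd : ∃ c : ℤ, ∀ k ∈ Finset.Icc c (c + n - 1), ∃! p, p ∈ S ∧ p.1 + p.2 = k) :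
    Odd n := by
  obtain ⟨a, ha⟩ := hx
  obtain ⟨b, hb⟩ := hy
  obtain ⟨c, hc⟩ := hd
  have hsum : ∑ p ∈ S, (p.1 + p.2) = ∑ p ∈ S, p.1 + ∑ p ∈ S, p.2 := sum_add_distrib
  have hcols := two_mul_sum_eq_of_Icc_subset_image Prod.fst hcard fun k hk => (ha k hk).exists
  have hrows := two_mul_sum_eq_of_Icc_subset_image Prod.snd hcard fun k hk => (hb k hk).exists
  have hdiags := two_mul_sum_eq_of_Icc_subset_image (fun p => p.1 + p.2) hcard
    fun k hk => (hc k hk).exists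
  have hfactor : (n : ℤ) * (2 * (a + b - c) + n - 1) = 0 := by
    linear_combination hdiags - hcols - hrows - 2 * hsum
  have hn' : (n : ℤ) ≠ 0 := by exact_mod_cast hn.ne'
  have hodd : (n : ℤ) = 2 * (c - a - b) + 1 := by
    linear_combination (mul_eq_zero.mp hfactor).resolve_left hn'
  exact ⟨(c - a - b).toNat, by omega⟩
end

section
/- Let n be a positive integer and let S ⊆ ℤ² be a set of n points occupying (after translation, assume) columns 1,…,n with one point per column, rows 1,…,n with one point per row, and diagonals x+y = c+1, …, c+n for some integer c with one point per diagonal. Then n is odd and c = (n+1)/2; equivalently, S is contained in the region {(x,y) : 1 ≤ x ≤ n, 1 ≤ y ≤ n, (n+1)/2 + 1 ≤ x+y ≤ (n+1)/2 + n}, which is the image under ξ of a Lee sphere of radius (n−1)/2. -/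
/-!
Since `S` has exactly `n` points and each of the `n` columns, rows and diagonals is hit, the
projections `x`, `y` and `x + y` map `S` bijectively onto their windows of `n` consecutive
integers. Summing `x + y` over `S` in two ways gives `n (2c + n + 1) / 2 = n (n + 1)`, so
`2c = n + 1`, which forces `n` to be odd.
-/

open Finset

namespace Finset

variable {α β : Type*} [DecidableEq β] {S : Finset α} {T : Finset β} {f : α → β}

theorem image_eq_of_card_eq_of_forall_exists (hcard : #T = #S)
    (hsurj : ∀ k ∈ T, ∃ p ∈ S, f p = k) : S.image f = T := by
  have hT : T ⊆ S.image f := fun k hk => mem_image.mpr (hsurj k hk)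
  exact (eq_of_subset_of_card_le hT (hcard ▸ card_image_le)).symm

theorem mem_of_card_eq_of_forall_exists (hcard : #T = #S)
    (hsurj : ∀ k ∈ T, ∃ p ∈ S, f p = k) {p : α} (hp : p ∈ S) : f p ∈ T :=
  image_eq_of_card_eq_of_forall_exists hcard hsurj ▸ mem_image_of_mem f hp

theorem injOn_of_card_eq_of_forall_exists (hcard : #T = #S)
    (hsurj : ∀ k ∈ T, ∃ p ∈ S, f p = k) : Set.InjOn f S :=
  card_image_iff.mp (by rw [image_eq_of_card_eq_of_forall_exists hcard hsurj, hcard])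

theorem sum_eq_sum_of_card_eq_of_forall_exists [AddCommMonoid β] (hcard : #T = #S)
    (hsurj : ∀ k ∈ T, ∃ p ∈ S, f p = k) : ∑ p ∈ S, f p = ∑ k ∈ T, k := by
  rw [← image_eq_of_card_eq_of_forall_exists hcard hsurj,
    sum_image (injOn_of_card_eq_of_forall_exists hcard hsurj)]

end Finset

theorem Int.two_mul_sum_Icc_add (a : ℤ) (n : ℕ) :
    2 * ∑ k ∈ Icc (a + 1) (a + n), k = n * (2 * a + n + 1) := by
  induction n with
  | zero => simp
  | succ m ih =>
    have hIcc : Icc (a + 1) (a + (m + 1 : ℕ)) = insert (a + m + 1) (Icc (a + 1) (a + m)) := by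
      push_cast
      rw [← add_assoc, insert_Icc_right_eq_Icc_add_one (by omega)]
    rw [hIcc, sum_insert (by simp), mul_add, ih]
    push_cast
    ring

/-- A hexagonal permutation occupying columns `1,…,n`, rows `1,…,n` and diagonals
`x+y = c+1,…,c+n` forces `n` odd and `c = (n+1)/2`, and the dots lie in the image
of a Lee sphere of radius `(n-1)/2`. -/
theorem hexagonal_permutation_lee_sphere (n : ℕ) (hn : 0 < n) (c : ℤ)
    (S : Finset (ℤ × ℤ)) (hcard : S.card = n)
    (hx : ∀ k ∈ Finset.Icc (1 : ℤ) n, ∃! p, p ∈ S ∧ p.1 = k)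
    (hy : ∀ k ∈ Finset.Icc (1 : ℤ) n, ∃! p, p ∈ S ∧ p.2 = k)
    (hd : ∀ k ∈ Finset.Icc (c + 1) (c + n), ∃! p, p ∈ S ∧ p.1 + p.2 = k) :
    Odd n ∧ 2 * c = n + 1 ∧
      ∀ p ∈ S, 1 ≤ p.1 ∧ p.1 ≤ n ∧ 1 ≤ p.2 ∧ p.2 ≤ n ∧
        c + 1 ≤ p.1 + p.2 ∧ p.1 + p.2 ≤ c + n := by
  have hcardx : #(Icc (1 : ℤ) n) = #S := by simp [hcard]
  have hcardd : #(Icc (c + 1) (c + n)) = #S := by simp [hcard]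
  have hx' : ∀ k ∈ Icc (1 : ℤ) n, ∃ p ∈ S, p.1 = k := fun k hk => (hx k hk).exists
  have hy' : ∀ k ∈ Icc (1 : ℤ) n, ∃ p ∈ S, p.2 = k := fun k hk => (hy k hk).exists
  have hd' : ∀ k ∈ Icc (c + 1) (c + n), ∃ p ∈ S, p.1 + p.2 = k := fun k hk => (hd k hk).exists
  have hgauss : 2 * ∑ k ∈ Icc (1 : ℤ) n, k = n * (n + 1) := by
    simpa using Int.two_mul_sum_Icc_add 0 n
  have hsum : (n : ℤ) * (2 * c + n + 1) = 2 * (n * (n + 1)) :=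
    calc (n : ℤ) * (2 * c + n + 1) = 2 * ∑ p ∈ S, (p.1 + p.2) := by
          rw [sum_eq_sum_of_card_eq_of_forall_exists hcardd hd', Int.two_mul_sum_Icc_add]
      _ = 2 * ∑ p ∈ S, p.1 + 2 * ∑ p ∈ S, p.2 := by rw [sum_add_distrib, mul_add]
      _ = 2 * (n * (n + 1)) := by
          rw [sum_eq_sum_of_card_eq_of_forall_exists hcardx hx',
            sum_eq_sum_of_card_eq_of_forall_exists hcardx hy', hgauss]
          ring
  have h2c : 2 * c = n + 1 := by
    have : (n : ℤ) * (2 * c) = n * (n + 1) := by linarith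
    exact mul_left_cancel₀ (by exact_mod_cast hn.ne') this
  refine ⟨by rw [← Int.odd_coe_nat]; exact ⟨c - 1, by omega⟩, h2c, fun p hp => ?_⟩
  have h1 := mem_Icc.mp (mem_of_card_eq_of_forall_exists hcardx hx' hp)
  have h2 := mem_Icc.mp (mem_of_card_eq_of_forall_exists hcardx hy' hp)
  have h3 := mem_Icc.mp (mem_of_card_eq_of_forall_exists hcardd hd' hp)
  omega
end

section
/- Suppose S ⊆ ℤ² consists of n points, one in each column x = 1,…,n, one in each row y = 1,…,n, and one in each diagonal x+y = c+1,…,c+n, where 0 ≤ c ≤ n−1 and c < (n+1)/2. Then S is a set of n non-attacking brooks contained in the triangular board {(x,y) : x ≥ 1, y ≥ 1, x+y ≤ n + c}, of width n + c − 1 < n + (n−1)/2, contradicting the bound b(w) = ⌊(2w+1)/3⌋ < n; hence there is no such S with c < (n+1)/2. -/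
open Finset

/-- If each `k ∈ T` has a unique preimage in `S` under `f` and the cards match,
then `∑ p ∈ S, f p = ∑ k ∈ T, k`. -/
lemma sum_of_unique {α : Type*} [DecidableEq α] [Nonempty α] {S : Finset α} {f : α → ℤ}
    {T : Finset ℤ} (hcard : S.card = T.card)
    (h : ∀ k ∈ T, ∃! p, p ∈ S ∧ f p = k) :
    ∑ p ∈ S, f p = ∑ k ∈ T, k := by
  classical
  set g : ℤ → α := fun k =>
    if hk : ∃ p, p ∈ S ∧ f p = k then hk.choose else Classical.arbitrary _ with hg
  have hgS : ∀ k ∈ T, g k ∈ S ∧ f (g k) = k := by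
    intro k hk
    obtain ⟨p, hp, _⟩ := h k hk
    have hex : ∃ p, p ∈ S ∧ f p = k := ⟨p, hp⟩
    simp only [hg, dif_pos hex]
    exact hex.choose_spec
  have hinj : Set.InjOn g T := by
    intro k₁ h₁ k₂ h₂ he
    have e₁ := (hgS k₁ h₁).2
    have e₂ := (hgS k₂ h₂).2
    rw [he] at e₁; rw [e₁] at e₂; exact e₂
  have himsub : T.image g ⊆ S := by
    intro p hp
    obtain ⟨k, hk, rfl⟩ := Finset.mem_image.mp hp
    exact (hgS k hk).1
  have hcard' : S.card ≤ (T.image g).card := by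
    rw [Finset.card_image_of_injOn hinj, hcard]
  have him : T.image g = S := Finset.eq_of_subset_of_card_le himsub hcard'
  calc ∑ p ∈ S, f p = ∑ p ∈ T.image g, f p := by rw [him]
    _ = ∑ k ∈ T, f (g k) := Finset.sum_image (fun a ha b hb => hinj ha hb)
    _ = ∑ k ∈ T, k := Finset.sum_congr rfl (fun k hk => (hgS k hk).2)

lemma gauss (n : ℕ) : 2 * ∑ k ∈ Finset.Icc (1 : ℤ) n, k = n * (n + 1) := by
  induction n with
  | zero => simp
  | succ m ih =>
    have hins : Finset.Icc (1 : ℤ) ((m + 1 : ℕ) : ℤ)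
        = insert ((m : ℤ) + 1) (Finset.Icc (1 : ℤ) (m : ℤ)) := by
      ext x
      simp only [Finset.mem_Icc, Finset.mem_insert]
      push_cast
      omega
    rw [hins, Finset.sum_insert (by simp), mul_add, ih]
    push_cast
    ring

/-- Key step in the Lee-sphere theorem: there is no hexagonal permutation with
columns `1,…,n`, rows `1,…,n` and diagonals `c+1,…,c+n` when `0 ≤ c ≤ n-1` and
`c < (n+1)/2`. -/
theorem no_low_diagonal_band (n : ℕ) (hpos : 0 < n) (c : ℤ)
    (hc0 : 0 ≤ c) (hc1 : c ≤ (n : ℤ) - 1) (hclow : 2 * c < (n : ℤ) + 1) :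
    ¬ ∃ S : Finset (ℤ × ℤ),
      S.card = n ∧
      (∀ k ∈ Finset.Icc (1 : ℤ) n, ∃! p, p ∈ S ∧ p.1 = k) ∧
      (∀ k ∈ Finset.Icc (1 : ℤ) n, ∃! p, p ∈ S ∧ p.2 = k) ∧
      (∀ k ∈ Finset.Icc (c + 1) (c + n), ∃! p, p ∈ S ∧ p.1 + p.2 = k) := by
  rintro ⟨S, hScard, hcol, hrow, hdiag⟩
  have hTcard : (Finset.Icc (1 : ℤ) n).card = n := by
    rw [Int.card_Icc]; simp
  have hDcard : (Finset.Icc (c + 1) (c + n)).card = n := by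
    rw [Int.card_Icc]; simp
  have h1 : ∑ p ∈ S, p.1 = ∑ k ∈ Finset.Icc (1 : ℤ) n, k :=
    sum_of_unique (by rw [hScard, hTcard]) hcol
  have h2 : ∑ p ∈ S, p.2 = ∑ k ∈ Finset.Icc (1 : ℤ) n, k :=
    sum_of_unique (by rw [hScard, hTcard]) hrow
  have h3 : ∑ p ∈ S, (p.1 + p.2) = ∑ k ∈ Finset.Icc (c + 1) (c + n), k :=
    sum_of_unique (by rw [hScard, hDcard]) hdiag
  have hshift : ∑ k ∈ Finset.Icc (c + 1) (c + n), k
      = (n : ℤ) * c + ∑ k ∈ Finset.Icc (1 : ℤ) n, k := by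
    rw [← Finset.map_add_left_Icc 1 (n : ℤ) c, Finset.sum_map]
    simp only [addLeftEmbedding_apply]
    rw [Finset.sum_add_distrib, Finset.sum_const, hTcard]
    ring_nf
  have hsum : ∑ p ∈ S, (p.1 + p.2) = ∑ p ∈ S, p.1 + ∑ p ∈ S, p.2 :=
    Finset.sum_add_distrib
  have key : ∑ k ∈ Finset.Icc (1 : ℤ) n, k = (n : ℤ) * c := by
    rw [hshift, hsum, h1, h2] at h3
    linarith
  have hg := gauss n
  rw [key] at hg
  have hn : (0 : ℤ) < (n : ℤ) := by exact_mod_cast hpos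
  nlinarith
end

section
/- If a honeycomb array (in square-grid coordinates) with n dots exists, then n is odd and, after translation, the dots form a Costas array of order n that is additionally contained in S_{(n−1)/2}(n) = {(x,y) : 1 ≤ x,y ≤ n, (n+3)/2 ≤ x+y ≤ (3n+1)/2}, with exactly one dot on each of the n diagonals x+y = c for (n+3)/2 ≤ c ≤ (3n+1)/2. -/
/-!
Sum the coordinates `x`, `y` and `x + y` over the dots. Each sum runs over an interval of `n`
consecutive integers, so `2 ∑ (x + y) = 2 ∑ x + 2 ∑ y` reads
`n (2d + n - 1) = n (2a + n - 1) + n (2b + n - 1)`, i.e. `2d = 2a + 2b + n - 1`. Hence `n` is odd,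
and after translating by `(1 - a, 1 - b)` the diagonals occupied are exactly
`(n + 3)/2 ≤ x + y ≤ (3n + 1)/2`. Translation preserves differences.
-/

open Finset

theorem card_Icc_add_sub_one (c : ℤ) (n : ℕ) : #(Icc c (c + n - 1)) = n := by
  rw [Int.card_Icc]; omega

theorem two_mul_sum_Icc_id (c : ℤ) (n : ℕ) :
    2 * ∑ k ∈ Icc c (c + n - 1), k = n * (2 * c + n - 1) := by
  induction n with
  | zero => simp
  | succ n ih =>
    have hIcc : Icc c (c + ↑(n + 1) - 1) = insert (c + n) (Icc c (c + n - 1)) := by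
      rw [insert_Icc_sub_one_right_eq_Icc (by omega)]; push_cast; ring_nf
    rw [hIcc, sum_insert (by simp), mul_add, ih]
    push_cast; ring

section
variable {α β : Type*} [DecidableEq β] {S : Finset α} {T : Finset β} {f : α → β}

theorem image_eq_of_existsUnique (h : ∀ k ∈ T, ∃! p, p ∈ S ∧ f p = k) (hcard : #S ≤ #T) :
    S.image f = T := by
  refine (eq_of_subset_of_card_le (fun k hk => ?_) (card_image_le.trans hcard)).symm
  obtain ⟨p, ⟨hp, rfl⟩, -⟩ := h k hk
  exact mem_image_of_mem f hp

theorem mem_of_existsUnique (h : ∀ k ∈ T, ∃! p, p ∈ S ∧ f p = k) (hcard : #S ≤ #T)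
    {p : α} (hp : p ∈ S) : f p ∈ T :=
  image_eq_of_existsUnique h hcard ▸ mem_image_of_mem f hp

theorem injOn_of_existsUnique (h : ∀ k ∈ T, ∃! p, p ∈ S ∧ f p = k) (hcard : #S ≤ #T) :
    Set.InjOn f S := fun p hp _ hq hpq =>
  (h (f p) (mem_of_existsUnique h hcard hp)).unique ⟨hp, rfl⟩ ⟨hq, hpq.symm⟩

theorem sum_eq_sum_of_existsUnique [AddCommMonoid β]
    (h : ∀ k ∈ T, ∃! p, p ∈ S ∧ f p = k) (hcard : #S ≤ #T) :
    ∑ p ∈ S, f p = ∑ k ∈ T, k := by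
  rw [← image_eq_of_existsUnique h hcard, sum_image (injOn_of_existsUnique h hcard)]

end

theorem existsUnique_mem_image_add {G H : Type*} [AddGroup G] [AddGroup H] [DecidableEq G]
    {S : Finset G} (f : G →+ H) (t : G) {k : H} (h : ∃! p, p ∈ S ∧ f p = k - f t) :
    ∃! p, p ∈ S.image (· + t) ∧ f p = k := by
  obtain ⟨q, ⟨hq, hfq⟩, huniq⟩ := h
  refine ⟨q + t, ⟨mem_image_of_mem _ hq, by rw [map_add, hfq, sub_add_cancel]⟩, ?_⟩
  rintro _ ⟨hp, hfp⟩
  obtain ⟨p, hpS, rfl⟩ := mem_image.mp hp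
  rw [huniq p ⟨hpS, by rw [eq_sub_iff_add_eq, ← map_add, hfp]⟩]

def DistinctDifferences {G : Type*} [Sub G] (S : Finset G) : Prop :=
  ∀ p ∈ S, ∀ q ∈ S, ∀ p' ∈ S, ∀ q' ∈ S, p ≠ q → p' ≠ q' → p - q = p' - q' → p = p' ∧ q = q'

theorem DistinctDifferences.image_add {G : Type*} [AddGroup G] [DecidableEq G] {S : Finset G}
    (hS : DistinctDifferences S) (t : G) : DistinctDifferences (S.image (· + t)) := by
  simp only [DistinctDifferences, mem_image, forall_exists_index, and_imp]
  rintro _ p hp rfl _ q hq rfl _ p' hp' rfl _ q' hq' rfl hpq hpq' hdiff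
  simp only [add_sub_add_right_eq_sub, ne_eq, add_left_inj] at hpq hpq' hdiff ⊢
  exact hS p hp q hq p' hp' q' hq' hpq hpq' hdiff

theorem two_mul_sum_eq_of_existsUnique_Icc {α : Type*} {S : Finset α} {f : α → ℤ} {n : ℕ}
    {c : ℤ} (hcard : #S = n) (h : ∀ k ∈ Icc c (c + n - 1), ∃! p, p ∈ S ∧ f p = k) :
    2 * ∑ p ∈ S, f p = n * (2 * c + n - 1) := by
  rw [sum_eq_sum_of_existsUnique h (by rw [hcard, card_Icc_add_sub_one]), two_mul_sum_Icc_id]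

theorem two_mul_diagonal_offset {n : ℕ} (hn : 0 < n) {a b d : ℤ} {S : Finset (ℤ × ℤ)}
    (hcard : #S = n)
    (hx : ∀ k ∈ Icc a (a + n - 1), ∃! p, p ∈ S ∧ p.1 = k)
    (hy : ∀ k ∈ Icc b (b + n - 1), ∃! p, p ∈ S ∧ p.2 = k)
    (hd : ∀ k ∈ Icc d (d + n - 1), ∃! p, p ∈ S ∧ p.1 + p.2 = k) :
    2 * d = 2 * a + 2 * b + n - 1 := by
  have hsum : (n : ℤ) * (2 * d + n - 1) = n * (2 * a + 2 * b + n - 1 + n - 1) := by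
    rw [← two_mul_sum_eq_of_existsUnique_Icc hcard hd, sum_add_distrib, mul_add,
      two_mul_sum_eq_of_existsUnique_Icc hcard hx, two_mul_sum_eq_of_existsUnique_Icc hcard hy]
    ring
  have := mul_left_cancel₀ (by exact_mod_cast hn.ne') hsum
  linarith

/-- If a honeycomb array with `n` dots exists then `n` is odd and, after a
translation, the dots form a Costas array of order `n` contained in
`S_{(n-1)/2}(n)`, with exactly one dot on each diagonal `x+y = k` for
`(n+3)/2 ≤ k ≤ (3n+1)/2`. -/
theorem honeycomb_structure (n : ℕ) (hn : 0 < n) (a b d : ℤ)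
    (S : Finset (ℤ × ℤ)) (hcard : S.card = n)
    (hx : ∀ k ∈ Finset.Icc a (a + n - 1), ∃! p, p ∈ S ∧ p.1 = k)
    (hy : ∀ k ∈ Finset.Icc b (b + n - 1), ∃! p, p ∈ S ∧ p.2 = k)
    (hd : ∀ k ∈ Finset.Icc d (d + n - 1), ∃! p, p ∈ S ∧ p.1 + p.2 = k)
    (hdiff : ∀ p ∈ S, ∀ q ∈ S, ∀ p' ∈ S, ∀ q' ∈ S,
      p ≠ q → p' ≠ q' → p - q = p' - q' → p = p' ∧ q = q') :
    Odd n ∧ ∃ t : ℤ × ℤ,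
      (∀ k ∈ Finset.Icc (1 : ℤ) n, ∃! p, p ∈ S.image (· + t) ∧ p.1 = k) ∧
      (∀ k ∈ Finset.Icc (1 : ℤ) n, ∃! p, p ∈ S.image (· + t) ∧ p.2 = k) ∧
      (∀ k : ℤ, (n : ℤ) + 3 ≤ 2 * k → 2 * k ≤ 3 * n + 1 →
        ∃! p, p ∈ S.image (· + t) ∧ p.1 + p.2 = k) ∧
      (∀ p ∈ S.image (· + t), 1 ≤ p.1 ∧ p.1 ≤ n ∧ 1 ≤ p.2 ∧ p.2 ≤ n ∧
        (n : ℤ) + 3 ≤ 2 * (p.1 + p.2) ∧ 2 * (p.1 + p.2) ≤ 3 * n + 1) ∧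
      (∀ p ∈ S.image (· + t), ∀ q ∈ S.image (· + t),
        ∀ p' ∈ S.image (· + t), ∀ q' ∈ S.image (· + t),
        p ≠ q → p' ≠ q' → p - q = p' - q' → p = p' ∧ q = q') := by
  have hoffset := two_mul_diagonal_offset hn hcard hx hy hd
  have hle : ∀ c : ℤ, #S ≤ #(Icc c (c + n - 1)) := fun c => by rw [hcard, card_Icc_add_sub_one]
  refine ⟨Int.odd_coe_nat n |>.mp ⟨d - a - b, by omega⟩, (1 - a, 1 - b),
    fun k hk => ?_, fun k hk => ?_, fun k hk₁ hk₂ => ?_, ?_, DistinctDifferences.image_add hdiff _⟩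
  · rw [mem_Icc] at hk
    exact existsUnique_mem_image_add (AddMonoidHom.fst ℤ ℤ) _ (hx (k - (1 - a)) (mem_Icc.mpr (by omega)))
  · rw [mem_Icc] at hk
    exact existsUnique_mem_image_add (AddMonoidHom.snd ℤ ℤ) _ (hy (k - (1 - b)) (mem_Icc.mpr (by omega)))
  · exact existsUnique_mem_image_add (AddMonoidHom.fst ℤ ℤ + AddMonoidHom.snd ℤ ℤ) _
      (hd (k - (1 - a + (1 - b))) (mem_Icc.mpr (by omega)))
  · simp only [mem_image, forall_exists_index, and_imp]
    rintro _ p hp rfl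
    have hp₁ := mem_Icc.mp (mem_of_existsUnique hx (hle a) hp)
    have hp₂ := mem_Icc.mp (mem_of_existsUnique hy (hle b) hp)
    have hp₃ := mem_Icc.mp (mem_of_existsUnique hd (hle d) hp)
    simp only [Prod.fst_add, Prod.snd_add]
    omega
end
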